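/- arXiv:1804.06321 — 3 statements merged into one kernel-verified Lean document; each statement's English description precedes it below -/
import Mathlib

section
/- Under the condition (1 − ρ⁻²)Σ_ρ⁻¹ − B̄B̄ᵀ ≥ 0 with ρ > 1, the fixed point Σ_ρ of the Lyapunov equation satisfies Θ(Σ_ρ) ≤ Σ_ρ, where Θ(X) = Āᵀ(X⁻¹ − B̄B̄ᵀ)⁻¹Ā + θI. -/
open Matrix
open scoped ComplexOrder

noncomputable def specRad {n : ℕ} (A : Matrix (Fin n) (Fin n) ℝ) : ℝ :=
  sSup ((fun μ => ‖μ‖) '' spectrum ℂ (A.map (Complex.ofReal)))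

/-!
With `M = Σ⁻¹ - B̄B̄ᵀ`, the Lyapunov equation gives `Σ - Θ(Σ) = Āᵀ (ρ² Σ - M⁻¹) Ā`, so it suffices that
`M⁻¹ ≤ ρ² Σ`. The hypothesis says exactly `ρ⁻² Σ⁻¹ ≤ M`, and matrix inversion is antitone in the
Loewner order.
-/

namespace Matrix

variable {𝕜 ι : Type*} [RCLike 𝕜] [Fintype ι] [DecidableEq ι]

theorem PosDef.inv_sub_inv_posSemidef {A B : Matrix ι ι 𝕜} (hA : A.PosDef)
    (hAB : (B - A).PosSemidef) : (A⁻¹ - B⁻¹).PosSemidef := by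
  have hB : B.PosDef := by simpa using PosDef.posSemidef_add hAB hA
  have hAu : IsUnit A.det := (isUnit_iff_isUnit_det A).mp hA.isUnit
  have hBu : IsUnit B.det := (isUnit_iff_isUnit_det B).mp hB.isUnit
  have hsq : B * A⁻¹ * B - B = (B - A) * A⁻¹ * (B - A) + (B - A) := by
    simp only [Matrix.sub_mul, Matrix.mul_sub, Matrix.mul_assoc, nonsing_inv_mul _ hAu,
      mul_nonsing_inv_cancel_left _ _ hAu, Matrix.mul_one]
    abel
  have hconj : A⁻¹ - B⁻¹ = B⁻¹ * (B * A⁻¹ * B - B) * B⁻¹ := by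
    rw [Matrix.mul_sub, Matrix.sub_mul, Matrix.mul_assoc B, nonsing_inv_mul_cancel_left _ _ hBu,
      mul_nonsing_inv_cancel_right _ _ hBu, nonsing_inv_mul _ hBu, Matrix.one_mul]
  have hmid : (B * A⁻¹ * B - B).PosSemidef := by
    rw [hsq]
    refine PosSemidef.add ?_ hAB
    simpa [hAB.isHermitian.eq] using hA.inv.posSemidef.conjTranspose_mul_mul_same (B - A)
  simpa [conjTranspose_nonsing_inv, hB.isHermitian.eq, hconj] using
    hmid.conjTranspose_mul_mul_same B⁻¹

end Matrix

theorem stmt_5_general {n m : ℕ} (Abar : Matrix (Fin n) (Fin n) ℝ)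
    (Bbar : Matrix (Fin n) (Fin m) ℝ) (ρ θ : ℝ) (hρ : 1 < ρ)
    (Sρ : Matrix (Fin n) (Fin n) ℝ)
    (hS : Sρ = (ρ ^ 2) • (Abarᵀ * Sρ * Abar) + θ • (1 : Matrix (Fin n) (Fin n) ℝ))
    (hSpd : Sρ.PosDef)
    (hcond : ((1 - ρ⁻¹ ^ 2) • Sρ⁻¹ - Bbar * Bbarᵀ).PosSemidef) :
    (Sρ - (Abarᵀ * (Sρ⁻¹ - Bbar * Bbarᵀ)⁻¹ * Abar
        + θ • (1 : Matrix (Fin n) (Fin n) ℝ))).PosSemidef := by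
  set M := Sρ⁻¹ - Bbar * Bbarᵀ
  have hρ2 : 0 < ρ⁻¹ ^ 2 := by positivity
  have hMD : (M - ρ⁻¹ ^ 2 • Sρ⁻¹).PosSemidef := by
    convert hcond using 1
    simp only [M, sub_smul, one_smul]
    abel
  have hSu : IsUnit Sρ.det := (isUnit_iff_isUnit_det Sρ).mp hSpd.isUnit
  have hD : (ρ⁻¹ ^ 2 • Sρ⁻¹)⁻¹ = ρ ^ 2 • Sρ := by
    refine inv_eq_left_inv ?_
    rw [smul_mul_smul_comm, mul_nonsing_inv _ hSu, ← mul_pow, mul_inv_cancel₀ (by positivity),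
      one_pow, one_smul]
  have hMinv : (ρ ^ 2 • Sρ - M⁻¹).PosSemidef := by
    rw [← hD]
    exact (hSpd.inv.smul hρ2).inv_sub_inv_posSemidef hMD
  have hgap : Sρ - (Abarᵀ * M⁻¹ * Abar + θ • 1) = Abarᵀ * (ρ ^ 2 • Sρ - M⁻¹) * Abar := by
    nth_rewrite 1 [hS]
    simp only [Matrix.mul_sub, Matrix.sub_mul, Matrix.mul_smul, Matrix.smul_mul]
    abel
  rw [hgap]
  simpa using hMinv.conjTranspose_mul_mul_same Abar

/-- Under the condition `(1 - ρ⁻²) Σ_ρ⁻¹ - B̄B̄ᵀ ≥ 0` with `ρ > 1`,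
the fixed point `Σ_ρ` of the Lyapunov equation satisfies `Θ(Σ_ρ) ≤ Σ_ρ`, where
`Θ(X) = Āᵀ (X⁻¹ - B̄B̄ᵀ)⁻¹ Ā + θ I`. -/
theorem stmt_5 {n m : ℕ} (Abar : Matrix (Fin n) (Fin n) ℝ)
    (Bbar : Matrix (Fin n) (Fin m) ℝ) (hBB : (Bbar * Bbarᵀ).PosDef)
    (hA : specRad Abar < 1) (ρ θ : ℝ) (hρ : 1 < ρ)
    (hρA : ρ * specRad Abar < 1) (hθ : 0 < θ)
    (Sρ : Matrix (Fin n) (Fin n) ℝ)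
    (hS : Sρ = (ρ ^ 2) • (Abarᵀ * Sρ * Abar) + θ • (1 : Matrix (Fin n) (Fin n) ℝ))
    (hSpd : Sρ.PosDef)
    (hcond : ((1 - ρ⁻¹ ^ 2) • Sρ⁻¹ - Bbar * Bbarᵀ).PosSemidef) :
    (Sρ - (Abarᵀ * (Sρ⁻¹ - Bbar * Bbarᵀ)⁻¹ * Abar
        + θ • (1 : Matrix (Fin n) (Fin n) ℝ))).PosSemidef :=
  stmt_5_general Abar Bbar ρ θ hρ Sρ hS hSpd hcond
end

section
/- The compact set 𝒞 = {X symmetric : θI ≤ X ≤ Σ_ρ} is invariant under Θ: if X ∈ 𝒞 then Θ(X) ∈ 𝒞. Moreover 𝒞 is nonempty since θI ∈ 𝒞. -/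
open Matrix

/-! In the Loewner order, `Σ_ρ - θI = ρ² ĀᵀΣ_ρĀ ≥ 0`, so `θI ∈ 𝒞`. For `θI ≤ X ≤ Σ_ρ`, the
inverse being antitone gives `X⁻¹ ≥ Σ_ρ⁻¹`, and with `B̄B̄ᵀ ≤ (1 - ρ⁻²) Σ_ρ⁻¹` this yields
`X⁻¹ - B̄B̄ᵀ ≥ ρ⁻² Σ_ρ⁻¹ > 0`. Inverting once more, `(X⁻¹ - B̄B̄ᵀ)⁻¹ ≤ ρ² Σ_ρ`, hence
`Θ(X) ≤ ρ² ĀᵀΣ_ρĀ + θI = Σ_ρ`; and `Θ(X) ≥ θI` since congruence by `Ā` preserves positivity. -/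

open scoped MatrixOrder ComplexOrder

namespace Matrix

variable {𝕜 ι : Type*} [RCLike 𝕜]

theorem PosDef.of_le {A B : Matrix ι ι 𝕜} (hA : A.PosDef) (hAB : A ≤ B) : B.PosDef := by
  simpa using hA.add_posSemidef hAB

variable [Fintype ι]

theorem transpose_mul_mul_le_transpose_mul_mul {A B : Matrix ι ι ℝ} (hAB : A ≤ B)
    (C : Matrix ι ι ℝ) : Cᵀ * A * C ≤ Cᵀ * B * C := by
  have h := star_left_conjugate_le_conjugate hAB C
  rwa [star_eq_conjTranspose, conjTranspose_eq_transpose_of_trivial] at h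

theorem transpose_mul_mul_nonneg {A : Matrix ι ι ℝ} (hA : 0 ≤ A) (C : Matrix ι ι ℝ) :
    0 ≤ Cᵀ * A * C := by
  simpa using transpose_mul_mul_le_transpose_mul_mul hA C

variable [DecidableEq ι]

theorem PosDef.inv_le_inv_of_le {A B : Matrix ι ι 𝕜} (hA : A.PosDef) (hAB : A ≤ B) :
    B⁻¹ ≤ A⁻¹ := by
  have hB : B.PosDef := hA.of_le hAB
  have := hA.isUnit.invertible
  have := hA.inv.isUnit.invertible
  have := hB.isUnit.invertible
  -- Both Schur complements of `[[B, 1], [1, A⁻¹]]` characterise its positivity.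
  have hblock : (fromBlocks B 1 1ᴴ A⁻¹).PosSemidef :=
    (PosDef.fromBlocks₂₂ B 1 hA.inv).2 (by simpa [inv_inv_of_invertible] using le_iff.mp hAB)
  exact le_iff.mpr (by simpa using (PosDef.fromBlocks₁₁ 1 A⁻¹ hB).1 hblock)

theorem smul_inv_le_inv_sub {S X M : Matrix ι ι 𝕜} {c : ℝ} (hX : X.PosDef) (hXS : X ≤ S)
    (hM : M ≤ (1 - c) • S⁻¹) : c • S⁻¹ ≤ X⁻¹ - M :=
  calc c • S⁻¹ = S⁻¹ - (1 - c) • S⁻¹ := by rw [sub_smul, one_smul, sub_sub_cancel]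
    _ ≤ X⁻¹ - M := sub_le_sub (hX.inv_le_inv_of_le hXS) hM

end Matrix

theorem stmt_6_general {n m : ℕ} (Abar : Matrix (Fin n) (Fin n) ℝ)
    (Bbar : Matrix (Fin n) (Fin m) ℝ) (ρ θ : ℝ) (hρ : 1 < ρ) (hθ : 0 < θ)
    (Sρ : Matrix (Fin n) (Fin n) ℝ)
    (hS : Sρ = (ρ ^ 2) • (Abarᵀ * Sρ * Abar) + θ • (1 : Matrix (Fin n) (Fin n) ℝ))
    (hSpd : Sρ.PosDef)
    (hcond : ((1 - ρ⁻¹ ^ 2) • Sρ⁻¹ - Bbar * Bbarᵀ).PosSemidef) :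
    -- θI belongs to 𝒞:
    (Sρ - θ • (1 : Matrix (Fin n) (Fin n) ℝ)).PosSemidef ∧
    -- invariance of 𝒞 under Θ:
    ∀ X : Matrix (Fin n) (Fin n) ℝ, X.IsHermitian →
      (X - θ • (1 : Matrix (Fin n) (Fin n) ℝ)).PosSemidef →
      (Sρ - X).PosSemidef →
      ((Abarᵀ * (X⁻¹ - Bbar * Bbarᵀ)⁻¹ * Abar + θ • (1 : Matrix (Fin n) (Fin n) ℝ))
          - θ • (1 : Matrix (Fin n) (Fin n) ℝ)).PosSemidef ∧
      (Sρ - (Abarᵀ * (X⁻¹ - Bbar * Bbarᵀ)⁻¹ * Abar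
          + θ • (1 : Matrix (Fin n) (Fin n) ℝ))).PosSemidef := by
  have hc : 0 < ρ⁻¹ ^ 2 := by positivity
  have hS_conj : Sρ = Abarᵀ * ((ρ ^ 2) • Sρ) * Abar + θ • 1 := by
    rwa [Matrix.mul_smul, Matrix.smul_mul]
  have hconj_nonneg : 0 ≤ Abarᵀ * ((ρ ^ 2) • Sρ) * Abar :=
    transpose_mul_mul_nonneg (smul_nonneg (sq_nonneg ρ) hSpd.posSemidef.nonneg) Abar
  refine ⟨?_, fun X _ (hθX : θ • 1 ≤ X) (hXS : X ≤ Sρ) => ?_⟩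
  · show θ • 1 ≤ Sρ
    exact hS_conj ▸ le_add_of_nonneg_left hconj_nonneg
  have hX : X.PosDef := (PosDef.one.smul hθ).of_le hθX
  have hD : ρ⁻¹ ^ 2 • Sρ⁻¹ ≤ X⁻¹ - Bbar * Bbarᵀ :=
    smul_inv_le_inv_sub hX hXS (le_iff.mpr hcond)
  have hDpd : (X⁻¹ - Bbar * Bbarᵀ).PosDef := (hSpd.inv.smul hc).of_le hD
  have hDinv : (X⁻¹ - Bbar * Bbarᵀ)⁻¹ ≤ (ρ ^ 2) • Sρ := by
    have hinv : (ρ⁻¹ ^ 2 • Sρ⁻¹)⁻¹ = (ρ ^ 2) • Sρ := by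
      refine inv_eq_left_inv ?_
      rw [smul_mul_smul_comm, ← mul_pow, mul_inv_cancel₀ (by positivity), one_pow, one_smul,
        mul_nonsing_inv _ ((isUnit_iff_isUnit_det _).mp hSpd.isUnit)]
    exact hinv ▸ (hSpd.inv.smul hc).inv_le_inv_of_le hD
  constructor
  · show θ • (1 : Matrix (Fin n) (Fin n) ℝ) ≤ _
    exact le_add_of_nonneg_left (transpose_mul_mul_nonneg hDpd.inv.posSemidef.nonneg Abar)
  · show _ ≤ Sρ
    calc _ ≤ Abarᵀ * ((ρ ^ 2) • Sρ) * Abar + θ • 1 := by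
          gcongr
          exact transpose_mul_mul_le_transpose_mul_mul hDinv Abar
      _ = Sρ := hS_conj.symm

/-- The compact set `𝒞 = {X symmetric : θI ≤ X ≤ Σ_ρ}` is invariant
under `Θ(X) = Āᵀ (X⁻¹ - B̄B̄ᵀ)⁻¹ Ā + θ I`, and is nonempty since `θI ∈ 𝒞`. -/
theorem stmt_6 {n m : ℕ} (Abar : Matrix (Fin n) (Fin n) ℝ)
    (Bbar : Matrix (Fin n) (Fin m) ℝ) (hBB : (Bbar * Bbarᵀ).PosDef)
    (hA : specRad Abar < 1) (ρ θ : ℝ) (hρ : 1 < ρ)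
    (hρA : ρ * specRad Abar < 1) (hθ : 0 < θ)
    (Sρ : Matrix (Fin n) (Fin n) ℝ)
    (hS : Sρ = (ρ ^ 2) • (Abarᵀ * Sρ * Abar) + θ • (1 : Matrix (Fin n) (Fin n) ℝ))
    (hSpd : Sρ.PosDef)
    (hcond : ((1 - ρ⁻¹ ^ 2) • Sρ⁻¹ - Bbar * Bbarᵀ).PosSemidef) :
    -- θI belongs to 𝒞:
    (Sρ - θ • (1 : Matrix (Fin n) (Fin n) ℝ)).PosSemidef ∧
    -- invariance of 𝒞 under Θ:
    ∀ X : Matrix (Fin n) (Fin n) ℝ, X.IsHermitian →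
      (X - θ • (1 : Matrix (Fin n) (Fin n) ℝ)).PosSemidef →
      (Sρ - X).PosSemidef →
      ((Abarᵀ * (X⁻¹ - Bbar * Bbarᵀ)⁻¹ * Abar + θ • (1 : Matrix (Fin n) (Fin n) ℝ))
          - θ • (1 : Matrix (Fin n) (Fin n) ℝ)).PosSemidef ∧
      (Sρ - (Abarᵀ * (X⁻¹ - Bbar * Bbarᵀ)⁻¹ * Abar
          + θ • (1 : Matrix (Fin n) (Fin n) ℝ))).PosSemidef :=
  stmt_6_general Abar Bbar ρ θ hρ hθ Sρ hS hSpd hcond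
end

section
/- Time-varying Lyapunov convergence: if F_t → F with F Schur stable and R_t → R (with R_t symmetric positive semidefinite), then the sequence defined by Y_{t+1} = F_t Y_t F_tᵀ + R_t (from any initial symmetric Y_0) converges to the unique solution Y of Y = F Y Fᵀ + R. -/
open Matrix

/-- Schur stability: all complex eigenvalues lie strictly inside the unit
circle. -/
def SchurStable {k : Type*} [Fintype k] [DecidableEq k]
    (M : Matrix k k ℝ) : Prop :=
  ∀ μ ∈ spectrum ℂ (M.map (Complex.ofReal)), ‖μ‖ < 1

/-!
By Gelfand's formula a Schur stable `F` satisfies `F ^ k → 0`, so `X ↦ X - F X Fᵀ` is injective,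
hence bijective, and `Y = F Y Fᵀ + R` has a unique solution `Ȳ`. The error `E t = Y t - Ȳ`
obeys `E (t + 1) = F t * E t * (F t)ᵀ + D t` with `D t → 0`. For `m` with
`θ = ‖F ^ m‖ * ‖(Fᵀ) ^ m‖ < 1`, the Lyapunov function `V X = ∑ k < m, ‖F ^ k * X * (Fᵀ) ^ k‖`
is comparable to `‖X‖` and drops by `(1 - θ) * ‖X‖` under `X ↦ F X Fᵀ`. This survives replacing
`F` by `F t` for large `t`, so `V (E (t + 1)) ≤ κ * V (E t) + O(‖D t‖)` with `κ < 1`, and `E t → 0`.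
-/

open Filter Topology Finset

theorem tendsto_zero_of_le_mul_add {u v : ℕ → ℝ} {κ : ℝ} (hκ₀ : 0 ≤ κ) (hκ₁ : κ < 1)
    (hu : ∀ t, 0 ≤ u t) (hv : Tendsto v atTop (𝓝 0))
    (hrec : ∀ᶠ t in atTop, u (t + 1) ≤ κ * u t + v t) : Tendsto u atTop (𝓝 0) := by
  refine tendsto_order.2 ⟨fun ε hε => .of_forall fun t => hε.trans_le (hu t), fun ε hε => ?_⟩
  obtain ⟨T, hT⟩ := (hrec.and (hv.eventually_lt_const
    (by positivity : 0 < (1 - κ) * (ε / 2)))).exists_forall_of_atTop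
  have hgeom (k : ℕ) : u (T + k) - ε / 2 ≤ κ ^ k * max (u T - ε / 2) 0 := by
    induction k with
    | zero => simp
    | succ k ih =>
      obtain ⟨hstep, hvT⟩ := hT (T + k) (Nat.le_add_right T k)
      calc u (T + (k + 1)) - ε / 2 ≤ κ * (u (T + k) - ε / 2) := by
            rw [← add_assoc]; linarith
        _ ≤ κ * (κ ^ k * max (u T - ε / 2) 0) := by gcongr
        _ = κ ^ (k + 1) * max (u T - ε / 2) 0 := by ring
  have hsmall : Tendsto (fun k => κ ^ k * max (u T - ε / 2) 0) atTop (𝓝 0) := by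
    simpa using (tendsto_pow_atTop_nhds_zero_of_lt_one hκ₀ hκ₁).mul_const (max (u T - ε / 2) 0)
  obtain ⟨K, hK⟩ := (hsmall.eventually_lt_const (half_pos hε)).exists_forall_of_atTop
  filter_upwards [eventually_ge_atTop (T + K)] with t ht
  obtain ⟨k, rfl⟩ : ∃ k, t = T + k := ⟨t - T, by omega⟩
  linarith [hgeom k, hK k (by omega)]

section NormedRing

variable {A : Type*} [NormedRing A]

def lyapunovFun (a b : A) (m : ℕ) (x : A) : ℝ :=
  ∑ k ∈ range m, ‖a ^ k * x * b ^ k‖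

variable {a b : A} {m : ℕ}

theorem norm_le_lyapunovFun (hm : m ≠ 0) (x : A) : ‖x‖ ≤ lyapunovFun a b m x := by
  simpa [lyapunovFun] using single_le_sum (fun k _ => norm_nonneg (a ^ k * x * b ^ k))
    (mem_range.2 (Nat.pos_of_ne_zero hm))

theorem lyapunovFun_le (x : A) :
    lyapunovFun a b m x ≤ (∑ k ∈ range m, ‖a ^ k‖ * ‖b ^ k‖) * ‖x‖ := by
  rw [lyapunovFun, sum_mul]
  refine sum_le_sum fun k _ => ?_
  calc ‖a ^ k * x * b ^ k‖ ≤ ‖a ^ k‖ * ‖x‖ * ‖b ^ k‖ := norm_mul₃_le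
    _ = ‖a ^ k‖ * ‖b ^ k‖ * ‖x‖ := by ring

theorem lyapunovFun_add_le (x y : A) :
    lyapunovFun a b m (x + y) ≤ lyapunovFun a b m x + lyapunovFun a b m y := by
  rw [lyapunovFun, lyapunovFun, lyapunovFun, ← sum_add_distrib]
  exact sum_le_sum fun k _ => by simpa only [mul_add, add_mul] using norm_add_le _ _

theorem lyapunovFun_mul_mul_add_norm (x : A) :
    lyapunovFun a b m (a * x * b) + ‖x‖ = lyapunovFun a b m x + ‖a ^ m * x * b ^ m‖ := by
  have hshift (k : ℕ) : a ^ k * (a * x * b) * b ^ k = a ^ (k + 1) * x * b ^ (k + 1) := by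
    rw [pow_succ, pow_succ']; simp only [mul_assoc]
  simp only [lyapunovFun, hshift]
  rw [← sum_range_succ, sum_range_succ' (fun k => ‖a ^ k * x * b ^ k‖)]
  simp

theorem lyapunovFun_mul_mul_le (x : A) :
    lyapunovFun a b m (a * x * b) ≤ lyapunovFun a b m x - (1 - ‖a ^ m‖ * ‖b ^ m‖) * ‖x‖ := by
  have hshift := lyapunovFun_mul_mul_add_norm (a := a) (b := b) (m := m) x
  have hlast : ‖a ^ m * x * b ^ m‖ ≤ ‖a ^ m‖ * ‖b ^ m‖ * ‖x‖ := by
    calc ‖a ^ m * x * b ^ m‖ ≤ ‖a ^ m‖ * ‖x‖ * ‖b ^ m‖ := norm_mul₃_le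
      _ = _ := by ring
  linarith

theorem norm_mul_mul_sub_mul_mul_le (a' b' x : A) :
    ‖a' * x * b' - a * x * b‖ ≤ (‖a' - a‖ * ‖b'‖ + ‖a‖ * ‖b' - b‖) * ‖x‖ := by
  calc ‖a' * x * b' - a * x * b‖ = ‖(a' - a) * x * b' + a * x * (b' - b)‖ := by
        congr 1; noncomm_ring
    _ ≤ ‖a' - a‖ * ‖x‖ * ‖b'‖ + ‖a‖ * ‖x‖ * ‖b' - b‖ :=
        (norm_add_le _ _).trans (add_le_add norm_mul₃_le norm_mul₃_le)
    _ = (‖a' - a‖ * ‖b'‖ + ‖a‖ * ‖b' - b‖) * ‖x‖ := by ring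

theorem lyapunovFun_mul_mul_le_of_perturbation (a' b' x : A) :
    lyapunovFun a b m (a' * x * b') ≤ lyapunovFun a b m x -
      (1 - ‖a ^ m‖ * ‖b ^ m‖ - (∑ k ∈ range m, ‖a ^ k‖ * ‖b ^ k‖) *
        (‖a' - a‖ * ‖b'‖ + ‖a‖ * ‖b' - b‖)) * ‖x‖ := by
  have hC : 0 ≤ ∑ k ∈ range m, ‖a ^ k‖ * ‖b ^ k‖ := sum_nonneg fun k _ => by positivity
  calc lyapunovFun a b m (a' * x * b')
      ≤ lyapunovFun a b m (a * x * b) + lyapunovFun a b m (a' * x * b' - a * x * b) := by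
        simpa only [add_sub_cancel] using lyapunovFun_add_le (a := a) (b := b) (m := m)
          (a * x * b) (a' * x * b' - a * x * b)
    _ ≤ lyapunovFun a b m x - (1 - ‖a ^ m‖ * ‖b ^ m‖) * ‖x‖ +
          (∑ k ∈ range m, ‖a ^ k‖ * ‖b ^ k‖) * ((‖a' - a‖ * ‖b'‖ + ‖a‖ * ‖b' - b‖) * ‖x‖) :=
        add_le_add (lyapunovFun_mul_mul_le x) ((lyapunovFun_le _).trans
          (mul_le_mul_of_nonneg_left (norm_mul_mul_sub_mul_mul_le a' b' x) hC))
    _ = _ := by ring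

theorem tendsto_zero_of_eq_mul_mul_add {a b x d : ℕ → A} {a₀ b₀ : A}
    (ha : Tendsto a atTop (𝓝 a₀)) (hb : Tendsto b atTop (𝓝 b₀))
    (ha₀ : Tendsto (a₀ ^ ·) atTop (𝓝 0)) (hb₀ : Tendsto (b₀ ^ ·) atTop (𝓝 0))
    (hd : Tendsto d atTop (𝓝 0)) (hx : ∀ t, x (t + 1) = a t * x t * b t + d t) :
    Tendsto x atTop (𝓝 0) := by
  obtain ⟨m, hθ, hm⟩ : ∃ m, ‖a₀ ^ m‖ * ‖b₀ ^ m‖ < 1 ∧ m ≠ 0 := by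
    have : Tendsto (fun k => ‖a₀ ^ k‖ * ‖b₀ ^ k‖) atTop (𝓝 0) := by
      simpa using ha₀.norm.mul hb₀.norm
    exact ((this.eventually_lt_const one_pos).and (eventually_ne_atTop 0)).exists
  set θ := ‖a₀ ^ m‖ * ‖b₀ ^ m‖
  set C := ∑ k ∈ range m, ‖a₀ ^ k‖ * ‖b₀ ^ k‖
  set V := lyapunovFun a₀ b₀ m
  have hC : 0 ≤ C := sum_nonneg fun k _ => by positivity
  have hη : Tendsto (fun t => C * (‖a t - a₀‖ * ‖b t‖ + ‖a₀‖ * ‖b t - b₀‖)) atTop (𝓝 0) := by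
    simpa using (((tendsto_iff_norm_sub_tendsto_zero.1 ha).mul hb.norm).add
      ((tendsto_iff_norm_sub_tendsto_zero.1 hb).const_mul ‖a₀‖)).const_mul C
  have hrate : (1 - θ) / (2 * (C + 1)) ≤ 1 := by
    rw [div_le_one (by positivity)]; nlinarith [norm_nonneg (a₀ ^ m), norm_nonneg (b₀ ^ m)]
  -- half of the decrease `(1 - θ) * ‖x t‖` absorbs the perturbation; as `V ≤ (C + 1) * ‖·‖`,
  -- the other half is a relative decrease of `V` by the factor `(1 - θ) / (2 * (C + 1))`
  refine squeeze_zero_norm (fun t => norm_le_lyapunovFun hm (x t)) (tendsto_zero_of_le_mul_add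
    (u := fun t => V (x t)) (v := fun t => C * ‖d t‖) (κ := 1 - (1 - θ) / (2 * (C + 1)))
    (by linarith) (sub_lt_self _ (div_pos (by linarith) (by positivity)))
    (fun t => (norm_nonneg (x t)).trans (norm_le_lyapunovFun hm (x t)))
    (by simpa using hd.norm.const_mul C) ?_)
  filter_upwards [hη.eventually_le_const (by linarith : (0 : ℝ) < (1 - θ) / 2)] with t ht
  have hVx : (1 - θ) / (2 * (C + 1)) * V (x t) ≤ (1 - θ) / 2 * ‖x t‖ := by
    have hV : V (x t) ≤ (C + 1) * ‖x t‖ :=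
      (lyapunovFun_le _).trans (by gcongr; linarith)
    calc (1 - θ) / (2 * (C + 1)) * V (x t)
        ≤ (1 - θ) / (2 * (C + 1)) * ((C + 1) * ‖x t‖) :=
          mul_le_mul_of_nonneg_left hV (div_nonneg (by linarith) (by positivity))
      _ = (1 - θ) / 2 * ‖x t‖ := by field_simp
  calc V (x (t + 1)) ≤ V (a t * x t * b t) + V (d t) := by rw [hx]; exact lyapunovFun_add_le _ _
    _ ≤ V (x t) - (1 - θ - C * (‖a t - a₀‖ * ‖b t‖ + ‖a₀‖ * ‖b t - b₀‖)) * ‖x t‖ + C * ‖d t‖ :=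
        add_le_add (lyapunovFun_mul_mul_le_of_perturbation _ _ _) (lyapunovFun_le _)
    _ ≤ _ := by nlinarith [norm_nonneg (x t)]

end NormedRing

section TopologicalRing

variable {A : Type*} [Ring A] {a b : A}

theorem eq_pow_mul_mul_pow_of_eq_mul_mul {x : A} (hx : x = a * x * b) (k : ℕ) :
    x = a ^ k * x * b ^ k := by
  induction k with
  | zero => simp
  | succ k ih =>
    calc x = a ^ k * (a * x * b) * b ^ k := by rw [← hx, ← ih]
      _ = a ^ (k + 1) * x * b ^ (k + 1) := by rw [pow_succ, pow_succ']; simp only [mul_assoc]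

variable [TopologicalSpace A] [IsTopologicalRing A] [T2Space A]

theorem eq_zero_of_eq_mul_mul (ha : Tendsto (a ^ ·) atTop (𝓝 0))
    (hb : Tendsto (b ^ ·) atTop (𝓝 0)) {x : A} (hx : x = a * x * b) : x = 0 := by
  have hlim : Tendsto (fun k => a ^ k * x * b ^ k) atTop (𝓝 (0 * x * 0)) :=
    (ha.mul_const x).mul hb
  rw [zero_mul, zero_mul] at hlim
  exact tendsto_nhds_unique (tendsto_const_nhds.congr (eq_pow_mul_mul_pow_of_eq_mul_mul hx)) hlim

theorem existsUnique_eq_mul_mul_add (𝕜 : Type*) [Field 𝕜] [Algebra 𝕜 A] [FiniteDimensional 𝕜 A]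
    (ha : Tendsto (a ^ ·) atTop (𝓝 0)) (hb : Tendsto (b ^ ·) atTop (𝓝 0)) (r : A) :
    ∃! x, x = a * x * b + r := by
  set L : A →ₗ[𝕜] A := LinearMap.id - LinearMap.mulLeft 𝕜 a ∘ₗ LinearMap.mulRight 𝕜 b
  have hL (x : A) : L x = x - a * x * b := by simp [L, mul_assoc]
  have hinj : Function.Injective L := by
    refine (injective_iff_map_eq_zero L).2 fun x hx => eq_zero_of_eq_mul_mul ha hb ?_
    rwa [hL, sub_eq_zero] at hx
  simpa [hL, sub_eq_iff_eq_add, add_comm] using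
    (Function.Bijective.existsUnique ⟨hinj, LinearMap.injective_iff_surjective.1 hinj⟩ r)

end TopologicalRing

theorem spectrum.tendsto_pow_nhds_zero_of_spectralRadius_lt_one {A : Type*} [NormedRing A]
    [NormedAlgebra ℂ A] [CompleteSpace A] {a : A} (ha : spectralRadius ℂ a < 1) :
    Tendsto (a ^ ·) atTop (𝓝 0) := by
  obtain ⟨r, hρr, hr1⟩ := ENNReal.lt_iff_exists_nnreal_btwn.1 ha
  have hroot :=
    (spectrum.pow_nnnorm_pow_one_div_tendsto_nhds_spectralRadius a).eventually_lt_const hρr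
  refine squeeze_zero_norm' ?_ (tendsto_pow_atTop_nhds_zero_of_lt_one r.2 (by exact_mod_cast hr1))
  filter_upwards [hroot, eventually_gt_atTop 0] with k hk hk0
  have hpow := (ENNReal.rpow_lt_rpow_iff (z := k) (by positivity)).2 hk
  rw [← ENNReal.rpow_mul, one_div_mul_cancel (by positivity), ENNReal.rpow_one,
    ENNReal.rpow_natCast] at hpow
  exact_mod_cast hpow.le

section MatrixNorm

attribute [local instance] Matrix.linftyOpNormedRing Matrix.linftyOpNormedAlgebra

theorem SchurStable.spectralRadius_lt_one {ι : Type*} [Fintype ι] [DecidableEq ι]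
    {M : Matrix ι ι ℝ} (hM : SchurStable M) : spectralRadius ℂ (M.map Complex.ofReal) < 1 := by
  rcases (spectrum ℂ (M.map Complex.ofReal)).eq_empty_or_nonempty with h | h
  · simp [spectralRadius, h]
  · exact_mod_cast spectrum.spectralRadius_lt_of_forall_lt_of_nonempty h
      (r := 1) fun μ hμ => by exact_mod_cast hM μ hμ

theorem SchurStable.tendsto_pow_nhds_zero {ι : Type*} [Fintype ι] [DecidableEq ι]
    {M : Matrix ι ι ℝ} (hM : SchurStable M) : Tendsto (M ^ ·) atTop (𝓝 0) := by
  have hC := spectrum.tendsto_pow_nhds_zero_of_spectralRadius_lt_one hM.spectralRadius_lt_one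
  have hre := ((continuous_id.matrix_map Complex.continuous_re).tendsto 0).comp hC
  have hmap (k : ℕ) : ((M.map Complex.ofReal) ^ k).map Complex.re = M ^ k := by
    rw [show (Complex.ofReal : ℝ → ℂ) = Complex.ofRealHom from rfl, ← Matrix.map_pow,
      Matrix.map_map]
    ext i j
    simp
  simpa [Function.comp_def, hmap] using hre

end MatrixNorm

theorem stmt_18_general {n : ℕ} (F : ℕ → Matrix (Fin n) (Fin n) ℝ)
    (Flim : Matrix (Fin n) (Fin n) ℝ)
    (hF : Filter.Tendsto F Filter.atTop (nhds Flim)) (hFs : SchurStable Flim)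
    (R : ℕ → Matrix (Fin n) (Fin n) ℝ)
    (Rlim : Matrix (Fin n) (Fin n) ℝ)
    (hR : Filter.Tendsto R Filter.atTop (nhds Rlim))
    (Y : ℕ → Matrix (Fin n) (Fin n) ℝ)
    (hYrec : ∀ t, Y (t + 1) = F t * Y t * (F t)ᵀ + R t) :
    ∃ Ylim : Matrix (Fin n) (Fin n) ℝ,
      Filter.Tendsto Y Filter.atTop (nhds Ylim) ∧
      Ylim = Flim * Ylim * Flimᵀ + Rlim ∧
      ∀ Z : Matrix (Fin n) (Fin n) ℝ, Z = Flim * Z * Flimᵀ + Rlim → Z = Ylim := by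
  have hpow := hFs.tendsto_pow_nhds_zero
  have hpowT : Tendsto (Flimᵀ ^ ·) atTop (𝓝 0) := by
    simpa [Function.comp_def, transpose_pow] using
      (continuous_id.matrix_transpose.tendsto 0).comp hpow
  have hFT : Tendsto (fun t => (F t)ᵀ) atTop (𝓝 Flimᵀ) :=
    (continuous_id.matrix_transpose.tendsto Flim).comp hF
  obtain ⟨Ylim, hYlim, huniq⟩ := existsUnique_eq_mul_mul_add ℝ hpow hpowT Rlim
  refine ⟨Ylim, ?_, hYlim, huniq⟩
  have hd : Tendsto (fun t => F t * Ylim * (F t)ᵀ + R t - Ylim) atTop (𝓝 0) := by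
    have := (((hF.mul_const Ylim).mul hFT).add hR).sub_const Ylim
    rwa [← hYlim, sub_self] at this
  let _ : NormedRing (Matrix (Fin n) (Fin n) ℝ) := Matrix.linftyOpNormedRing
  have he : Tendsto (fun t => Y t - Ylim) atTop (𝓝 0) :=
    tendsto_zero_of_eq_mul_mul_add hF hFT hpow hpowT hd fun t => by rw [hYrec]; noncomm_ring
  simpa using he.add_const Ylim

/-- Time-varying Lyapunov convergence: if `F_t → F` with `F`
Schur stable and `R_t → R` with the `R_t` symmetric positive semidefinite, then
the sequence `Y_{t+1} = F_t Y_t F_tᵀ + R_t` (from any symmetric `Y_0`)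
converges to the unique solution of `Y = F Y Fᵀ + R`. -/
theorem stmt_18 {n : ℕ} (F : ℕ → Matrix (Fin n) (Fin n) ℝ)
    (Flim : Matrix (Fin n) (Fin n) ℝ)
    (hF : Filter.Tendsto F Filter.atTop (nhds Flim)) (hFs : SchurStable Flim)
    (R : ℕ → Matrix (Fin n) (Fin n) ℝ) (hRpsd : ∀ t, (R t).PosSemidef)
    (Rlim : Matrix (Fin n) (Fin n) ℝ)
    (hR : Filter.Tendsto R Filter.atTop (nhds Rlim))
    (Y : ℕ → Matrix (Fin n) (Fin n) ℝ) (hY0 : (Y 0).IsHermitian)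
    (hYrec : ∀ t, Y (t + 1) = F t * Y t * (F t)ᵀ + R t) :
    ∃ Ylim : Matrix (Fin n) (Fin n) ℝ,
      Filter.Tendsto Y Filter.atTop (nhds Ylim) ∧
      Ylim = Flim * Ylim * Flimᵀ + Rlim ∧
      ∀ Z : Matrix (Fin n) (Fin n) ℝ, Z = Flim * Z * Flimᵀ + Rlim → Z = Ylim :=
  stmt_18_general F Flim hF hFs R Rlim hR Y hYrec
end
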